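/- Let a, b be traceless n×n Hermitian complex matrices, let A := a + i·b, and let g_t := exp((t/2)·A) for t ∈ ℝ. Let ρ be a positive semidefinite n×n complex matrix with Tr(ρ) = 1. Then for every t ∈ ℝ one has Tr(g_t ρ g_tᴴ) > 0 (a positive real number), and the curve γ(t) := g_t ρ g_tᴴ / Tr(g_t ρ g_tᴴ) is differentiable with derivative γ'(t) = (i/2)(b·γ(t) − γ(t)·b) + (1/2)(a·γ(t) + γ(t)·a) − Tr(a·γ(t))·γ(t) for all t ∈ ℝ. In other words, the normalized congruence action of the one-parameter subgroup exp(tA/2) of SL(n, ℂ) on quantum states is the integral curve of the sum of the Hamiltonian vector field of b and the gradient-like vector field of a. -/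

import Mathlib

open Matrix
open scoped ComplexOrder

attribute [local instance]
  Matrix.linftyOpNormedAddCommGroup Matrix.linftyOpNormedRing
  Matrix.linftyOpNormedAlgebra

/-!
With `B = A / 2` we have `g t = exp (t • B)`, so `F t = g t * ρ * (g t)ᴴ` solves
`F' = B F + F Bᴴ`. Since `g t` is invertible and `ρ ≠ 0` is positive semidefinite, `F t` is a
nonzero positive semidefinite matrix and its trace is a positive real. Normalizing by the trace
turns `F' = X(F)` into `γ' = X(γ) - Tr(X(γ)) γ`, and for Hermitian `a`, `b` the linear field
`X(γ) = B γ + γ Bᴴ` is `(i/2)[b, γ] + (1/2){a, γ}`, whose trace is `Tr(a γ)` because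
commutators are traceless.
-/

variable {m : Type*} [Fintype m]

theorem Matrix.PosSemidef.trace_mul_mul_conjTranspose_pos [DecidableEq m] {ρ : Matrix m m ℂ}
    (hρ : ρ.PosSemidef) (hρ0 : ρ ≠ 0) {g : Matrix m m ℂ} (hg : IsUnit g) :
    0 < (g * ρ * gᴴ).trace := by
  have hpsd := hρ.mul_mul_conjTranspose_same g
  refine hpsd.trace_nonneg.lt_of_ne (Ne.symm ?_)
  rwa [Ne, hpsd.trace_eq_zero_iff, (show IsUnit gᴴ from hg.star).mul_left_eq_zero,
    hg.mul_right_eq_zero]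

theorem Complex.exists_ofReal_eq_of_pos {z : ℂ} (hz : 0 < z) : ∃ r : ℝ, 0 < r ∧ z = r :=
  ⟨z.re, (Complex.pos_iff.mp hz).1, Complex.eq_re_of_ofReal_le (r := 0) (by simpa using hz.le)⟩

theorem hasDerivAt_exp_ofReal_smul {𝔸 : Type*} [NormedRing 𝔸] [NormedAlgebra ℂ 𝔸]
    [CompleteSpace 𝔸] (x : 𝔸) (t : ℝ) :
    HasDerivAt (fun s : ℝ => NormedSpace.exp ((s : ℂ) • x))
      (NormedSpace.exp ((t : ℂ) • x) * x) t := by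
  simpa only [Complex.coe_smul] using hasDerivAt_exp_smul_const (𝕂 := ℝ) x t

theorem Matrix.conjTranspose_exp_ofReal_smul [DecidableEq m] (B : Matrix m m ℂ) (s : ℝ) :
    (NormedSpace.exp ((s : ℂ) • B))ᴴ = NormedSpace.exp ((s : ℂ) • Bᴴ) := by
  rw [← Matrix.exp_conjTranspose, conjTranspose_smul, Complex.star_def, Complex.conj_ofReal]

theorem hasDerivAt_exp_mul_mul_conjTranspose_exp [DecidableEq m] (B ρ : Matrix m m ℂ) (t : ℝ) :
    HasDerivAt
      (fun s : ℝ => NormedSpace.exp ((s : ℂ) • B) * ρ * (NormedSpace.exp ((s : ℂ) • B))ᴴ)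
      (B * (NormedSpace.exp ((t : ℂ) • B) * ρ * (NormedSpace.exp ((t : ℂ) • B))ᴴ)
        + NormedSpace.exp ((t : ℂ) • B) * ρ * (NormedSpace.exp ((t : ℂ) • B))ᴴ * Bᴴ) t := by
  simp only [conjTranspose_exp_ofReal_smul]
  have hcomm : Commute B (NormedSpace.exp ((t : ℂ) • B)) :=
    ((Commute.refl B).smul_right _).exp_right
  refine (((hasDerivAt_exp_ofReal_smul B t).mul_const ρ).mul
    (hasDerivAt_exp_ofReal_smul Bᴴ t)).congr_deriv ?_
  simp only [← mul_assoc, hcomm.eq]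
  noncomm_ring

theorem hasDerivAt_trace_inv_smul [DecidableEq m] {F : ℝ → Matrix m m ℂ} {F' : Matrix m m ℂ}
    {t : ℝ} (hF : HasDerivAt F F' t) (ht : (F t).trace ≠ 0) :
    HasDerivAt (fun s => (F s).trace⁻¹ • F s)
      ((F t).trace⁻¹ • F' - ((F t).trace⁻¹ • F').trace • ((F t).trace⁻¹ • F t)) t := by
  have htrace : HasDerivAt (fun s => (F s).trace) F'.trace t :=
    ((traceLinearMap m ℂ ℂ).toContinuousLinearMap.restrictScalars ℝ).hasFDerivAt.comp_hasDerivAt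
      t hF
  refine (((hasDerivAt_inv ht).scomp t htrace).smul hF).congr_deriv ?_
  simp only [Function.comp_apply, trace_smul, smul_smul, smul_eq_mul]
  rw [sub_eq_add_neg, ← neg_smul]
  congr 2
  ring

theorem half_smul_mul_add_mul_conjTranspose {a b : Matrix m m ℂ} (ha : a.IsHermitian)
    (hb : b.IsHermitian) (γ : Matrix m m ℂ) :
    (1 / 2 : ℂ) • (a + Complex.I • b) * γ + γ * ((1 / 2 : ℂ) • (a + Complex.I • b))ᴴ
      = (Complex.I / 2) • (b * γ - γ * b) + (1 / 2 : ℂ) • (a * γ + γ * a) := by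
  simp only [conjTranspose_smul, conjTranspose_add, ha.eq, hb.eq, star_div₀, star_one,
    star_ofNat, Complex.star_def, Complex.conj_I]
  simp only [Matrix.smul_mul, Matrix.mul_smul, add_mul, mul_add, smul_add, smul_smul]
  module

theorem trace_commutator_add_anticommutator (a b γ : Matrix m m ℂ) :
    ((Complex.I / 2) • (b * γ - γ * b) + (1 / 2 : ℂ) • (a * γ + γ * a)).trace
      = (a * γ).trace := by
  simp only [trace_add, trace_sub, trace_smul, trace_mul_comm γ, smul_eq_mul]
  ring

theorem integral_curve_of_normalized_sl_action {n : ℕ}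
    (a b : Matrix (Fin n) (Fin n) ℂ)
    (ha : a.IsHermitian) (hb : b.IsHermitian)
    (A : Matrix (Fin n) (Fin n) ℂ) (hA : A = a + Complex.I • b)
    (g : ℝ → Matrix (Fin n) (Fin n) ℂ)
    (hg : ∀ t : ℝ, g t = NormedSpace.exp (((t : ℂ) / 2) • A))
    (ρ : Matrix (Fin n) (Fin n) ℂ) (hρ : ρ.PosSemidef) (hρtr : ρ.trace = 1)
    (γ : ℝ → Matrix (Fin n) (Fin n) ℂ)
    (hγ : ∀ t : ℝ, γ t = (Matrix.trace (g t * ρ * (g t)ᴴ))⁻¹ • (g t * ρ * (g t)ᴴ)) :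
    ∀ t : ℝ,
      (∃ r : ℝ, 0 < r ∧ Matrix.trace (g t * ρ * (g t)ᴴ) = (r : ℂ)) ∧
      HasDerivAt γ
        ((Complex.I / 2) • (b * γ t - γ t * b) + (1 / 2 : ℂ) • (a * γ t + γ t * a)
          - (Matrix.trace (a * γ t)) • γ t) t := by
  intro t
  set B : Matrix (Fin n) (Fin n) ℂ := (1 / 2 : ℂ) • (a + Complex.I • b)
  have hgB : g = fun s : ℝ => NormedSpace.exp ((s : ℂ) • B) := by
    ext1 s
    rw [hg, hA, smul_smul, div_eq_mul_one_div]
  have hρ0 : ρ ≠ 0 := by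
    rintro rfl
    simp at hρtr
  have hpos : 0 < (g t * ρ * (g t)ᴴ).trace :=
    hρ.trace_mul_mul_conjTranspose_pos hρ0 (hgB ▸ isUnit_exp _)
  refine ⟨Complex.exists_ofReal_eq_of_pos hpos, ?_⟩
  have hF : HasDerivAt (fun s => g s * ρ * (g s)ᴴ)
      (B * (g t * ρ * (g t)ᴴ) + g t * ρ * (g t)ᴴ * Bᴴ) t := by
    subst hgB
    exact hasDerivAt_exp_mul_mul_conjTranspose_exp B ρ t
  have hX : (g t * ρ * (g t)ᴴ).trace⁻¹ • (B * (g t * ρ * (g t)ᴴ) + g t * ρ * (g t)ᴴ * Bᴴ)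
      = B * γ t + γ t * Bᴴ := by
    simp only [hγ, smul_add, Matrix.mul_smul, Matrix.smul_mul]
  convert hasDerivAt_trace_inv_smul hF hpos.ne' using 1
  · exact funext hγ
  · rw [hX, ← hγ, half_smul_mul_add_mul_conjTranspose ha hb,
      trace_commutator_add_anticommutator]
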